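/- The toric code ground state ψ_{C_K4} on the tetrahedron (a lattice of sphere topology with n_s = 4 vertices, vertex degree d = 3 and n = 6 qubits on the edges) satisfies E_G(ψ_{C_K4}) = n_s − 1 = 3, equivalently Λ_max(ψ_{C_K4})² = 2^{−3}. In particular the −1 topological correction to the geometric entanglement of spins is present for the sphere topology as well. -/

import Mathlib

open scoped BigOperators
open scoped Classical

noncomputable section

namespace GeomEnt

def qInner {ι : Type} [Fintype ι] (φ ψ : (ι → ZMod 2) → ℂ) : ℂ :=
  ∑ x : ι → ZMod 2, (starRingEnd ℂ) (φ x) * ψ x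

def IsProductState {ι : Type} [Fintype ι] (Φ : (ι → ZMod 2) → ℂ) : Prop :=
  ∃ φ : ι → ZMod 2 → ℂ,
    (∀ i, ‖φ i 0‖ ^ 2 + ‖φ i 1‖ ^ 2 = 1) ∧
    ∀ x, Φ x = ∏ i, φ i (x i)

def LambdaMax {ι : Type} [Fintype ι] (ψ : (ι → ZMod 2) → ℂ) : ℝ :=
  sSup { r : ℝ | ∃ Φ, IsProductState Φ ∧ r = ‖qInner Φ ψ‖ }

def EG {ι : Type} [Fintype ι] (ψ : (ι → ZMod 2) → ℂ) : ℝ :=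
  - Real.logb 2 (LambdaMax ψ ^ 2)

def codeState {ι : Type} [Fintype ι] (C : Set (ι → ZMod 2)) : (ι → ZMod 2) → ℂ :=
  fun x => if x ∈ C then (((Real.sqrt (Nat.card C))⁻¹ : ℝ) : ℂ) else 0

/-- The 6 edges of the tetrahedron (complete graph K₄ on `Fin 4`). -/
abbrev K4Edge := { e : Sym2 (Fin 4) // ¬ e.IsDiag }

/-- Cut space of the tetrahedron toric code. -/
def CK4 : Set (K4Edge → ZMod 2) :=
  { x | ∃ T : Fin 4 → ZMod 2,
      ∀ (u v : Fin 4) (h : ¬ (s(u, v) : Sym2 (Fin 4)).IsDiag),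
        x ⟨s(u, v), h⟩ = T u + T v }

/-!
Split the qubits into two halves such that a codeword of `C` is determined by its restriction to
either half. A product state factors as `Φ = Φ_A ⊗ Φ_B`, and by Cauchy–Schwarz
`∑_{x ∈ C} |Φ_A(x_A)| |Φ_B(x_B)| ≤ ‖Φ_A‖ ‖Φ_B‖ = 1`, because the sum over `C` runs over distinct
arguments of `Φ_A` and of `Φ_B`. Hence `|⟨Φ, ψ_C⟩| ≤ |C|^{-1/2}`, and a basis state `|x⟩` with
`x ∈ C` attains this bound. For the tetrahedron both halves can be taken to be Hamiltonian paths
of `K₄`: a cut is determined by its values on a spanning tree.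
-/

section CodeState

variable {ι : Type} [Fintype ι]

/-- Equivalently, `ψ_C` has Schmidt rank `|C|` across the bipartition `p | ¬ p`. -/
def DeterminedOnEachSide (C : Set (ι → ZMod 2)) (p : ι → Prop) : Prop :=
  Set.InjOn (Subtype.restrict p) C ∧ Set.InjOn (Subtype.restrict fun i => ¬ p i) C

lemma sum_univ_zmod_two {M : Type*} [AddCommMonoid M] (f : ZMod 2 → M) :
    ∑ z, f z = f 0 + f 1 :=
  Fin.sum_univ_two f

lemma sum_prod_norm_sq_le_one {φ : ι → ZMod 2 → ℂ} (hφ : ∀ i, ‖φ i 0‖ ^ 2 + ‖φ i 1‖ ^ 2 = 1)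
    (S : Finset (ι → ZMod 2)) : ∑ x ∈ S, ∏ i, ‖φ i (x i)‖ ^ 2 ≤ 1 :=
  calc ∑ x ∈ S, ∏ i, ‖φ i (x i)‖ ^ 2
      ≤ ∑ x : ι → ZMod 2, ∏ i, ‖φ i (x i)‖ ^ 2 :=
        Finset.sum_le_sum_of_subset_of_nonneg (Finset.subset_univ S) fun _ _ _ => by positivity
    _ = ∏ i, ∑ z, ‖φ i z‖ ^ 2 := (Fintype.prod_sum fun i z => ‖φ i z‖ ^ 2).symm
    _ = 1 := Finset.prod_eq_one fun i _ => (sum_univ_zmod_two _).trans (hφ i)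

lemma sum_prod_restrict_norm_sq_le_one {φ : ι → ZMod 2 → ℂ}
    (hφ : ∀ i, ‖φ i 0‖ ^ 2 + ‖φ i 1‖ ^ 2 = 1) {p : ι → Prop} [DecidablePred p]
    {S : Finset (ι → ZMod 2)}
    (hS : Set.InjOn (Subtype.restrict p) (S : Set (ι → ZMod 2))) :
    ∑ x ∈ S, ∏ i : Subtype p, ‖φ i (x i)‖ ^ 2 ≤ 1 :=
  calc ∑ x ∈ S, ∏ i : Subtype p, ‖φ i (x i)‖ ^ 2
      = ∑ y ∈ S.image (Subtype.restrict p), ∏ i : Subtype p, ‖φ i (y i)‖ ^ 2 :=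
        (Finset.sum_image (f := fun y : Subtype p → ZMod 2 => ∏ i : Subtype p, ‖φ i (y i)‖ ^ 2)
          hS).symm
    _ ≤ 1 := sum_prod_norm_sq_le_one (φ := fun i : Subtype p => φ i) (fun i => hφ i) _

lemma IsProductState.sum_norm_le_one {Φ : (ι → ZMod 2) → ℂ} (hΦ : IsProductState Φ)
    {p : ι → Prop} {S : Finset (ι → ZMod 2)}
    (hS : DeterminedOnEachSide (S : Set (ι → ZMod 2)) p) :
    ∑ x ∈ S, ‖Φ x‖ ≤ 1 := by
  obtain ⟨φ, hφ, hΦφ⟩ := hΦ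
  set f : (ι → ZMod 2) → ℝ := fun x => ∏ i : Subtype p, ‖φ i (x i)‖
  set g : (ι → ZMod 2) → ℝ := fun x => ∏ i : {i // ¬ p i}, ‖φ i (x i)‖
  have hfg : ∀ x, ‖Φ x‖ = f x * g x := fun x => by
    rw [hΦφ, norm_prod, ← Fintype.prod_subtype_mul_prod_subtype p]
  calc ∑ x ∈ S, ‖Φ x‖
      = ∑ x ∈ S, f x * g x := Finset.sum_congr rfl fun x _ => hfg x
    _ ≤ √(∑ x ∈ S, f x ^ 2) * √(∑ x ∈ S, g x ^ 2) := Real.sum_mul_le_sqrt_mul_sqrt S f g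
    _ ≤ √1 * √1 := by
        simp only [f, g, ← Finset.prod_pow]
        gcongr
        · exact sum_prod_restrict_norm_sq_le_one hφ hS.1
        · exact sum_prod_restrict_norm_sq_le_one hφ hS.2
    _ = 1 := by simp

lemma qInner_codeState (Φ : (ι → ZMod 2) → ℂ) (C : Set (ι → ZMod 2)) :
    qInner Φ (codeState C) =
      ((√(Nat.card C))⁻¹ : ℝ) * ∑ x ∈ C.toFinset, starRingEnd ℂ (Φ x) := by
  simp only [qInner, codeState, mul_ite, mul_zero]
  rw [← Finset.sum_filter, Set.filter_mem_univ_eq_toFinset, Finset.mul_sum]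
  simp only [mul_comm]

lemma IsProductState.norm_qInner_codeState_le {Φ : (ι → ZMod 2) → ℂ} (hΦ : IsProductState Φ)
    {C : Set (ι → ZMod 2)} {p : ι → Prop} (hC : DeterminedOnEachSide C p) :
    ‖qInner Φ (codeState C)‖ ≤ (√(Nat.card C))⁻¹ := by
  rw [← Set.coe_toFinset C] at hC
  rw [qInner_codeState, norm_mul, Complex.norm_real, Real.norm_of_nonneg (by positivity)]
  calc (√(Nat.card C))⁻¹ * ‖∑ x ∈ C.toFinset, starRingEnd ℂ (Φ x)‖
      ≤ (√(Nat.card C))⁻¹ * ∑ x ∈ C.toFinset, ‖Φ x‖ := by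
        gcongr
        exact (norm_sum_le _ _).trans_eq (by simp)
    _ ≤ (√(Nat.card C))⁻¹ * 1 := by gcongr; exact hΦ.sum_norm_le_one hC
    _ = (√(Nat.card C))⁻¹ := mul_one _

def basisState (x₀ : ι → ZMod 2) : (ι → ZMod 2) → ℂ := fun x => if x = x₀ then 1 else 0

lemma isProductState_basisState (x₀ : ι → ZMod 2) : IsProductState (basisState x₀) := by
  refine ⟨fun i z => if z = x₀ i then 1 else 0, fun i => ?_, fun x => ?_⟩
  · rw [← sum_univ_zmod_two fun z => ‖if z = x₀ i then (1 : ℂ) else 0‖ ^ 2]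
    simp [apply_ite]
  · simp [basisState, Finset.prod_boole, funext_iff]

lemma qInner_basisState (x₀ : ι → ZMod 2) (ψ : (ι → ZMod 2) → ℂ) :
    qInner (basisState x₀) ψ = ψ x₀ := by
  simp [qInner, basisState, apply_ite]

theorem lambdaMax_codeState {C : Set (ι → ZMod 2)} (hne : C.Nonempty) {p : ι → Prop}
    (hC : DeterminedOnEachSide C p) :
    LambdaMax (codeState C) = (√(Nat.card C))⁻¹ := by
  obtain ⟨x₀, hx₀⟩ := hne
  refine IsGreatest.csSup_eq ⟨⟨basisState x₀, isProductState_basisState x₀, ?_⟩, ?_⟩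
  · rw [qInner_basisState, codeState, if_pos hx₀, Complex.norm_real,
      Real.norm_of_nonneg (by positivity)]
  · rintro r ⟨Φ, hΦ, rfl⟩
    exact hΦ.norm_qInner_codeState_le hC

theorem lambdaMax_codeState_sq {C : Set (ι → ZMod 2)} (hne : C.Nonempty) {p : ι → Prop}
    (hC : DeterminedOnEachSide C p) :
    LambdaMax (codeState C) ^ 2 = (Nat.card C : ℝ)⁻¹ := by
  rw [lambdaMax_codeState hne hC, inv_pow, Real.sq_sqrt (Nat.cast_nonneg _)]

theorem eg_codeState {C : Set (ι → ZMod 2)} (hne : C.Nonempty) {p : ι → Prop}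
    (hC : DeterminedOnEachSide C p) :
    EG (codeState C) = Real.logb 2 (Nat.card C) := by
  rw [EG, lambdaMax_codeState_sq hne hC, Real.logb_inv, neg_neg]

end CodeState

def cut (T : Fin 4 → ZMod 2) : K4Edge → ZMod 2 :=
  fun e => Sym2.lift ⟨fun u v => T u + T v, fun _ _ => add_comm _ _⟩ e.1

lemma CK4_eq_range_cut : CK4 = Set.range cut := by
  ext x
  constructor
  · rintro ⟨T, hT⟩
    refine ⟨T, funext fun ⟨e, he⟩ => ?_⟩
    induction e using Sym2.ind with
    | _ u v => exact (hT u v he).symm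
  · rintro ⟨T, rfl⟩
    exact ⟨T, fun _ _ _ => rfl⟩

lemma card_CK4 : Nat.card CK4 = 2 ^ 3 := by
  rw [CK4_eq_range_cut, Nat.card_eq_card_toFinset, Set.toFinset_range]
  decide

/-- The Hamiltonian path `0 - 1 - 2 - 3`; the other three edges form the Hamiltonian path
`2 - 0 - 3 - 1`. -/
abbrev OnPath0123 (e : K4Edge) : Prop :=
  e.1 ∈ ({s(0, 1), s(1, 2), s(2, 3)} : Finset (Sym2 (Fin 4)))

lemma CK4_determinedOnEachSide : DeterminedOnEachSide CK4 OnPath0123 := by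
  rw [CK4_eq_range_cut]
  constructor <;>
  · rintro _ ⟨T, rfl⟩ _ ⟨T', rfl⟩
    revert T T'
    decide

/-- the toric code ground state on the tetrahedron (sphere topology,
n_s = 4 vertices, 6 edge qubits) has Λ_max² = 2⁻³, i.e. E_G = n_s − 1 = 3. -/
theorem toric_code_tetrahedron_GE :
    LambdaMax (codeState CK4) ^ 2 = ((2 : ℝ) ^ 3)⁻¹ ∧
    EG (codeState CK4) = 3 := by
  have hne : CK4.Nonempty := CK4_eq_range_cut ▸ Set.range_nonempty cut
  constructor
  · rw [lambdaMax_codeState_sq hne CK4_determinedOnEachSide, card_CK4]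
    norm_num
  · rw [eg_codeState hne CK4_determinedOnEachSide, card_CK4, Nat.cast_pow, Nat.cast_ofNat,
      Real.logb_pow, Real.logb_self_eq_one one_lt_two]
    norm_num

end GeomEnt
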